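/- For the (2,4,2) nilradical of gl(8,K), the minor M2(X) = X_{13}X_{24} − X_{14}X_{23} is invariant under conjugation by the unitriangular group N: M2(g⁻¹Xg) = M2(X) for all g ∈ N and X in the nilradical. -/
import Mathlib


noncomputable section

open Matrix

variable {K : Type*} [Field K] [CharZero K]

/-- membership in the (2,4,2) nilradical of gl(8,K) (indices 0-based):
entries vanish outside rows 1-2 × cols 3-8 and rows 3-6 × cols 7-8 (1-based). -/
def InNil242 (Y : Matrix (Fin 8) (Fin 8) K) : Prop :=
  ∀ i j : Fin 8,
    ¬ ((i.val < 2 ∧ 2 ≤ j.val) ∨ (2 ≤ i.val ∧ i.val < 6 ∧ 6 ≤ j.val)) → Y i j = 0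

/-- upper unitriangular matrices. -/
def IsUnitriangular {n : ℕ} (g : Matrix (Fin n) (Fin n) K) : Prop :=
  (∀ i, g i i = 1) ∧ ∀ i j : Fin n, j < i → g i j = 0

def fM1 (Y : Matrix (Fin 8) (Fin 8) K) : K := Y 1 2
def fM2 (Y : Matrix (Fin 8) (Fin 8) K) : K := Y 0 2 * Y 1 3 - Y 0 3 * Y 1 2
def fN1 (Y : Matrix (Fin 8) (Fin 8) K) : K := Y 5 6
def fN2 (Y : Matrix (Fin 8) (Fin 8) K) : K := Y 4 6 * Y 5 7 - Y 4 7 * Y 5 6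
def fL11 (Y : Matrix (Fin 8) (Fin 8) K) : K :=
  Y 1 2 * Y 2 6 + Y 1 3 * Y 3 6 + Y 1 4 * Y 4 6 + Y 1 5 * Y 5 6
def fL12 (Y : Matrix (Fin 8) (Fin 8) K) : K :=
  (Y 0 2 * Y 1 3 - Y 0 3 * Y 1 2) * Y 3 6 +
  (Y 0 2 * Y 1 4 - Y 0 4 * Y 1 2) * Y 4 6 +
  (Y 0 2 * Y 1 5 - Y 0 5 * Y 1 2) * Y 5 6
def fL21 (Y : Matrix (Fin 8) (Fin 8) K) : K :=
  Y 1 2 * (Y 2 6 * Y 5 7 - Y 2 7 * Y 5 6) +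
  Y 1 3 * (Y 3 6 * Y 5 7 - Y 3 7 * Y 5 6) +
  Y 1 4 * (Y 4 6 * Y 5 7 - Y 4 7 * Y 5 6)
def fL22 (Y : Matrix (Fin 8) (Fin 8) K) : K :=
  (Y 0 2 * Y 1 3 - Y 0 3 * Y 1 2) * (Y 3 6 * Y 5 7 - Y 3 7 * Y 5 6) +
  (Y 0 2 * Y 1 4 - Y 0 4 * Y 1 2) * (Y 4 6 * Y 5 7 - Y 4 7 * Y 5 6)
def fD (Y : Matrix (Fin 8) (Fin 8) K) : K :=
  (Y * Y) 0 6 * (Y * Y) 1 7 - (Y * Y) 0 7 * (Y * Y) 1 6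

/-- the minor M2 = X₁₃X₂₄ − X₁₄X₂₃ is N-invariant. -/
theorem M2_N_invariant (g Y : Matrix (Fin 8) (Fin 8) K)
    (hg : IsUnitriangular g) (hY : InNil242 Y) :
    fM2 (g⁻¹ * Y * g) = fM2 Y := by
  obtain ⟨hd, hu⟩ := hg
  have hdet : g.det = 1 := by
    rw [Matrix.det_of_upperTriangular (fun i j h => hu i j h)]
    simp [hd]
  have hinv : g⁻¹ * g = 1 := Matrix.nonsing_inv_mul g (by simp [hdet])
  have h00 : g⁻¹ 0 0 = 1 := by
    have := congrArg (fun M => M 0 0) hinv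
    simpa [Matrix.mul_apply, Fin.sum_univ_eight, hd,
      hu 1 0 (by decide), hu 2 0 (by decide), hu 3 0 (by decide), hu 4 0 (by decide),
      hu 5 0 (by decide), hu 6 0 (by decide), hu 7 0 (by decide)] using this
  have h10 : g⁻¹ 1 0 = 0 := by
    have := congrArg (fun M => M 1 0) hinv
    simpa [Matrix.mul_apply, Fin.sum_univ_eight, hd,
      hu 1 0 (by decide), hu 2 0 (by decide), hu 3 0 (by decide), hu 4 0 (by decide),
      hu 5 0 (by decide), hu 6 0 (by decide), hu 7 0 (by decide)] using this
  have h11 : g⁻¹ 1 1 = 1 := by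
    have := congrArg (fun M => M 1 1) hinv
    simpa [Matrix.mul_apply, Fin.sum_univ_eight, hd, h10,
      hu 2 1 (by decide), hu 3 1 (by decide), hu 4 1 (by decide), hu 5 1 (by decide),
      hu 6 1 (by decide), hu 7 1 (by decide)] using this
  simp only [fM2, Matrix.mul_apply, Fin.sum_univ_eight]
  simp only [hY 0 0 (by decide), hY 0 1 (by decide), hY 1 0 (by decide), hY 1 1 (by decide),
    hY 2 0 (by decide), hY 2 1 (by decide), hY 2 2 (by decide), hY 2 3 (by decide),
    hY 2 4 (by decide), hY 2 5 (by decide),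
    hY 3 0 (by decide), hY 3 1 (by decide), hY 3 2 (by decide), hY 3 3 (by decide),
    hY 3 4 (by decide), hY 3 5 (by decide),
    hY 4 0 (by decide), hY 4 1 (by decide), hY 4 2 (by decide), hY 4 3 (by decide),
    hY 4 4 (by decide), hY 4 5 (by decide),
    hY 5 0 (by decide), hY 5 1 (by decide), hY 5 2 (by decide), hY 5 3 (by decide),
    hY 5 4 (by decide), hY 5 5 (by decide),
    hY 6 0 (by decide), hY 6 1 (by decide), hY 6 2 (by decide), hY 6 3 (by decide),
    hY 6 4 (by decide), hY 6 5 (by decide), hY 6 6 (by decide), hY 6 7 (by decide),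
    hY 7 0 (by decide), hY 7 1 (by decide), hY 7 2 (by decide), hY 7 3 (by decide),
    hY 7 4 (by decide), hY 7 5 (by decide), hY 7 6 (by decide), hY 7 7 (by decide),
    hu 3 2 (by decide), hu 4 2 (by decide), hu 5 2 (by decide), hu 6 2 (by decide),
    hu 7 2 (by decide),
    hu 4 3 (by decide), hu 5 3 (by decide), hu 6 3 (by decide), hu 7 3 (by decide),
    h00, h10, h11, hd 2, hd 3]
  ring

end
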